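/- arXiv:2201.12508 — 3 statements merged into one kernel-verified Lean document; each statement's English description precedes it below -/
import Mathlib

section
/- Let R = K[H] be a numerical semigroup ring of Cohen-Macaulay type 2 with canonical ideal C = t^{F(H)}·ω_R. Then ℓ_R(R/tr_R(ω_R)) ≤ ℓ_R(C/R), where tr_R(ω_R) = (R:C)·C is the trace of the canonical module. -/
set_option synthInstance.maxHeartbeats 1000000
set_option maxHeartbeats 2000000

noncomputable section

open Polynomial

/-- The length of an `R`-module `M`, realized as the Krull dimension of its lattice of
submodules (for modules of finite length this is the usual Jordan–Hölder length). -/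
noncomputable def moduleLength (R M : Type*) [Ring R] [AddCommGroup M] [Module R M] :
    WithBot ℕ∞ :=
  Order.krullDim (Submodule R M)

/-- The numerical semigroup ring `R = K[H] = K[t^h : h ∈ H]`, realized as the subalgebra of
the rational function field `K(t)` generated by the monomials `t^h`, `h ∈ H`. -/
def nsRing (K : Type*) [Field K] (H : AddSubmonoid ℕ) : Subalgebra K (RatFunc K) :=
  Algebra.adjoin K {x : RatFunc K | ∃ h ∈ H, x = (RatFunc.X : RatFunc K) ^ h}

/-- The (graded) canonical module `ω_R = Σ_{α ∈ ℕ∖H} R·t^{-α}` of `K[H]`, as an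
`R`-submodule of `K(t)`. -/
def nsOmega (K : Type*) [Field K] (H : AddSubmonoid ℕ) :
    Submodule ↥(nsRing K H) (RatFunc K) :=
  Submodule.span ↥(nsRing K H)
    {x : RatFunc K | ∃ α : ℕ, α ∉ H ∧ x = (RatFunc.X : RatFunc K) ^ (-(α : ℤ))}

/-- The canonical ideal `C = t^{F(H)}·ω_R = Σ_{α ∈ ℕ∖H} R·t^{F(H)-α} ⊆ K[t]`. -/
def nsC (K : Type*) [Field K] (H : AddSubmonoid ℕ) (F : ℕ) :
    Submodule ↥(nsRing K H) (RatFunc K) :=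
  Submodule.span ↥(nsRing K H)
    {x : RatFunc K | ∃ α : ℕ, α ∉ H ∧ x = (RatFunc.X : RatFunc K) ^ ((F : ℤ) - (α : ℤ))}


/-- The set of pseudo-Frobenius numbers of `H`. -/
def PF (H : AddSubmonoid ℕ) : Set ℕ :=
  {α : ℕ | α ∉ H ∧ ∀ h ∈ H, h ≠ 0 → α + h ∈ H}

/-- The trace of the canonical module, `tr_R(ω_R) = (R:C)·C`, as an ideal of `R = K[H]`
(colon taken in the total ring of fractions `K(t)`, realized by `Submodule.div`). -/
def trC (K : Type*) [Field K] (H : AddSubmonoid ℕ) (F : ℕ) : Ideal ↥(nsRing K H) :=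
  (((1 : Submodule ↥(nsRing K H) (RatFunc K)) / nsC K H F) * nsC K H F).comap
    (Algebra.linearMap ↥(nsRing K H) (RatFunc K))

/-!
If `PF(H) = {f, F}`, every gap `α` of `H` reaches `f` or `F` by adding an element of `H`,
so `C = R + R·t^{F-f}`. Hence `r ↦ r·t^{F-f}` maps `R` onto `C/R`, and its kernel
`{r : r·t^{F-f} ∈ R} = R ∩ (R:C)` lies in `(R:C)·C` because `1 ∈ C`. Thus `R/tr_R(ω_R)` is a
quotient of `C/R`.
-/

open Submodule

theorem moduleLength_le_of_surjective {R M N : Type*} [Ring R] [AddCommGroup M] [Module R M]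
    [AddCommGroup N] [Module R N] (f : M →ₗ[R] N) (hf : Function.Surjective f) :
    moduleLength R N ≤ moduleLength R M :=
  Order.krullDim_le_of_strictMono _ (comap_strictMono_of_surjective hf)

theorem Set.exists_eq_pair_of_ncard_eq_two {α : Type*} {s : Set α} {a : α} (hs : s.ncard = 2)
    (ha : a ∈ s) : ∃ b, s = {b, a} := by
  obtain ⟨x, y, -, rfl⟩ := Set.ncard_eq_two.mp hs
  rcases ha with rfl | rfl
  · exact ⟨y, Set.pair_comm _ _⟩
  · exact ⟨x, rfl⟩

section OneSupSpan

variable {R A : Type*} [CommRing R] [CommRing A] [Algebra R A] {C : Submodule R A} {x : A}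

theorem algebraMap_mem_one_div_of_smul_mem_one (hC : C = 1 ⊔ span R {x}) {r : R}
    (hr : r • x ∈ (1 : Submodule R A)) : algebraMap R A r ∈ 1 / C := by
  have hCr : C ≤ (1 : Submodule R A).comap (r • LinearMap.id) := by
    rw [hC, sup_le_iff, span_singleton_le_iff_mem]
    exact ⟨fun y hy => smul_mem _ r hy, hr⟩
  rw [mem_div_iff_forall_mul_mem]
  intro y hy
  simpa [Algebra.smul_def] using hCr hy

theorem mem_comap_one_div_mul_self_of_smul_mem_one (hC : C = 1 ⊔ span R {x}) {r : R}
    (hr : r • x ∈ (1 : Submodule R A)) :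
    r ∈ (1 / C * C).comap (Algebra.linearMap R A) := by
  have h1C : (1 : A) ∈ C := one_le.mp (hC ▸ le_sup_left)
  simpa using mul_mem_mul (algebraMap_mem_one_div_of_smul_mem_one hC hr) h1C

def smulModOne (hx : x ∈ C) : R →ₗ[R] C ⧸ (1 : Submodule R A).comap C.subtype :=
  (mkQ _).comp (LinearMap.toSpanSingleton R C ⟨x, hx⟩)

theorem mem_ker_smulModOne_iff (hx : x ∈ C) {r : R} :
    r ∈ LinearMap.ker (smulModOne hx) ↔ r • x ∈ (1 : Submodule R A) := by
  simp [smulModOne, Quotient.mk_eq_zero]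

theorem smulModOne_surjective (hC : C = 1 ⊔ span R {x}) (hx : x ∈ C) :
    Function.Surjective (smulModOne hx) := by
  intro c
  obtain ⟨c, rfl⟩ := mkQ_surjective _ c
  have hc : (c : A) ∈ 1 ⊔ span R {x} := hC ▸ c.2
  obtain ⟨u, hu, v, hv, huv⟩ := mem_sup.mp hc
  obtain ⟨s, rfl⟩ := mem_span_singleton.mp hv
  refine ⟨s, (Submodule.Quotient.eq _).mpr ?_⟩
  have : s • x - (c : A) = -u := by rw [← huv]; abel
  simpa [this] using neg_mem hu

theorem moduleLength_quotient_comap_one_div_mul_self_le (hC : C = 1 ⊔ span R {x}) :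
    moduleLength R (R ⧸ (1 / C * C).comap (Algebra.linearMap R A)) ≤
      moduleLength R (C ⧸ (1 : Submodule R A).comap C.subtype) := by
  have hx : x ∈ C := hC ▸ mem_sup_right (mem_span_singleton_self x)
  have hker : LinearMap.ker (smulModOne hx) ≤ (1 / C * C).comap (Algebra.linearMap R A) :=
    fun r hr => mem_comap_one_div_mul_self_of_smul_mem_one hC ((mem_ker_smulModOne_iff hx).mp hr)
  calc _ ≤ moduleLength R (R ⧸ LinearMap.ker (smulModOne hx)) :=
        moduleLength_le_of_surjective _ (factor_surjective hker)
    _ ≤ _ := moduleLength_le_of_surjective _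
        (LinearMap.quotKerEquivOfSurjective _ (smulModOne_surjective hC hx)).symm.surjective

end OneSupSpan

section NumericalSemigroup

variable {K : Type*} [Field K] {H : AddSubmonoid ℕ}

theorem exists_add_mem_PF (hfin : {n : ℕ | n ∉ H}.Finite) {α : ℕ} (hα : α ∉ H) :
    ∃ p ∈ PF H, ∃ h ∈ H, α + h = p := by
  set S : Set ℕ := {n : ℕ | n ∉ H ∧ ∃ h ∈ H, α + h = n}
  have hSfin : S.Finite := hfin.subset fun n hn => hn.1
  obtain ⟨m, ⟨hmH, h₀, hh₀, rfl⟩, hmax⟩ :=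
    hSfin.exists_maximalFor id S ⟨α, hα, 0, H.zero_mem, add_zero α⟩
  refine ⟨α + h₀, ⟨hmH, fun h hh hne => ?_⟩, h₀, hh₀, rfl⟩
  by_contra hc
  have := hmax ⟨hc, h₀ + h, H.add_mem hh₀ hh, by omega⟩ (by simp)
  simp only [id] at this
  omega

theorem X_pow_mem_nsRing {h : ℕ} (hh : h ∈ H) : (RatFunc.X : RatFunc K) ^ h ∈ nsRing K H :=
  Algebra.subset_adjoin ⟨h, hh, rfl⟩

theorem X_pow_mem_one {h : ℕ} (hh : h ∈ H) :
    (RatFunc.X : RatFunc K) ^ h ∈ (1 : Submodule (nsRing K H) (RatFunc K)) := by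
  rw [one_eq_range]
  exact ⟨⟨_, X_pow_mem_nsRing hh⟩, rfl⟩

theorem nsC_eq_one_sup_span (hfin : {n : ℕ | n ∉ H}.Finite) {f F : ℕ} (hPF : PF H = {f, F})
    (hfF : f ≤ F) :
    nsC K H F = 1 ⊔ span (nsRing K H) {(RatFunc.X : RatFunc K) ^ (F - f)} := by
  have hf : f ∉ H := (hPF ▸ Set.mem_insert f {F} : f ∈ PF H).1
  have hF : F ∉ H := (hPF ▸ Set.mem_insert_of_mem f rfl : F ∈ PF H).1
  apply le_antisymm
  · rw [nsC, span_le]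
    rintro _ ⟨α, hα, rfl⟩
    obtain ⟨p, hp, h, hh, rfl⟩ := exists_add_mem_PF hfin hα
    rw [hPF] at hp
    rcases hp with rfl | rfl
    · have hX : (RatFunc.X : RatFunc K) ^ ((F : ℤ) - α) =
          (⟨_, X_pow_mem_nsRing hh⟩ : nsRing K H) •
            (RatFunc.X : RatFunc K) ^ (F - (α + h)) := by
        rw [Algebra.smul_def]
        change _ = (RatFunc.X : RatFunc K) ^ h * RatFunc.X ^ (F - (α + h))
        rw [← pow_add, ← zpow_natCast]
        congr 1
        omega
      exact hX ▸ mem_sup_right (smul_mem _ _ (mem_span_singleton_self _))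
    · have hX : (RatFunc.X : RatFunc K) ^ (((α + h : ℕ) : ℤ) - α) = RatFunc.X ^ h := by
        rw [← zpow_natCast]; congr 1; omega
      exact hX ▸ mem_sup_left (X_pow_mem_one hh)
  · refine sup_le (one_le.mpr (subset_span ⟨F, hF, by simp⟩)) ?_
    rw [span_singleton_le_iff_mem]
    exact subset_span ⟨f, hf, by rw [← zpow_natCast]; congr 1; omega⟩

end NumericalSemigroup

/-- If `R = K[H]` has Cohen-Macaulay type `2` (i.e. `|PF(H)| = 2`), then
`ℓ_R(R/tr_R(ω_R)) ≤ ℓ_R(C/R)`, where `C = t^{F(H)}·ω_R` and `tr_R(ω_R) = (R:C)·C`. -/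
theorem length_trace_le_of_type_two
    (K : Type*) [Field K] (H : AddSubmonoid ℕ) (hfin : {n : ℕ | n ∉ H}.Finite)
    (F : ℕ) (hF : F ∉ H) (hFmax : ∀ n : ℕ, F < n → n ∈ H)
    (htype : (PF H).ncard = 2) :
    moduleLength ↥(nsRing K H) (↥(nsRing K H) ⧸ trC K H F) ≤
      moduleLength ↥(nsRing K H)
        (↥(nsC K H F) ⧸
          ((1 : Submodule ↥(nsRing K H) (RatFunc K)).comap (nsC K H F).subtype)) := by
  have hFPF : F ∈ PF H := ⟨hF, fun h _ hh => hFmax _ (by omega)⟩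
  obtain ⟨f, hPF⟩ := Set.exists_eq_pair_of_ncard_eq_two htype hFPF
  have hfF : f ≤ F :=
    not_lt.mp fun hFf => (hPF ▸ Set.mem_insert f {F} : f ∈ PF H).1 (hFmax f hFf)
  exact moduleLength_quotient_comap_one_div_mul_self_le (nsC_eq_one_sup_span hfin hPF hfF)
end
end

section
/- Let R = K[H] be a numerical semigroup ring whose Cohen-Macaulay type is at most 3. Then ℓ_R(R/tr_R(ω_R)) ≤ g(H) − n(H). -/
set_option synthInstance.maxHeartbeats 1000000
set_option maxHeartbeats 2000000

noncomputable section

open Polynomial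

/-- The trace ideal `tr_R(ω_R) = Σ_{f ∈ Hom_R(ω_R, R)} Im f` of the canonical module of
`R = K[H]`. -/
def trOmega (K : Type*) [Field K] (H : AddSubmonoid ℕ) : Ideal ↥(nsRing K H) :=
  ⨆ f : ↥(nsOmega K H) →ₗ[↥(nsRing K H)] ↥(nsRing K H), LinearMap.range f

/-!
If `z - γ ∈ H` for every gap `γ`, multiplication by `t^z` maps `ω_R` into `R`, so `t^{z-γ}` lies in
the trace. Hence `R / tr_R(ω_R)` is spanned over `K` by the monomials `t^w`, `w ∈ W`, where `W` is
the set of exponents in `H` not of this form, and its length is at most `|W|`.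

The gaps are the reflections `F - h` of the `n(H)` elements `h < F` of `H`, together with the gaps
`g` for which `F - g` is a gap too. For `w ∈ W` some pseudo-Frobenius number `p ≠ F` does not
lie below `w + F` in the order of `H`; this forces `w < p` and makes `p - w` a gap of the second
kind. Type at most `3` leaves at most two such `p`, say `f₁` and `f₂`, and `w ↦ f₁ - w`, or else
`w ↦ F - (f₂ - w)`, injects `W` into the gaps of the second kind.
-/

theorem Set.exists_subset_insert_pair_of_ncard_le_three {α : Type*} {s : Set α} {a : α}
    (hs : s.Finite) (hcard : s.ncard ≤ 3) (ha : a ∈ s) :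
    ∃ b ∈ s, ∃ c ∈ s, s ⊆ {a, b, c} := by
  by_cases hb : ∃ b ∈ s, b ≠ a
  · obtain ⟨b, hb, hba⟩ := hb
    have hrest : (s \ {a, b}).ncard ≤ 1 := by
      rw [Set.ncard_sdiff (Set.insert_subset ha (Set.singleton_subset_iff.2 hb)),
        Set.ncard_pair hba.symm]
      omega
    by_cases hc : ∃ c ∈ s, c ≠ a ∧ c ≠ b
    · obtain ⟨c, hc, hca, hcb⟩ := hc
      refine ⟨b, hb, c, hc, fun x hx => ?_⟩
      by_contra hxabc
      simp only [Set.mem_insert_iff, Set.mem_singleton_iff, not_or] at hxabc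
      exact hxabc.2.2 ((Set.ncard_le_one_iff hs.sdiff).1 hrest
        (by simp [hx, hxabc.1, hxabc.2.1]) (by simp [hc, hca, hcb]))
    · push Not at hc
      refine ⟨b, hb, b, hb, fun x hx => ?_⟩
      by_cases hxa : x = a
      · simp [hxa]
      · simp [hc x hx hxa]
  · push Not at hb
    exact ⟨a, ha, a, ha, fun x hx => by simp [hb x hx]⟩

namespace NumericalSemigroup

variable {H : AddSubmonoid ℕ} {F : ℕ}

def dualGaps (H : AddSubmonoid ℕ) (F : ℕ) : Set ℕ := {g | g ∉ H ∧ F - g ∉ H}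

/-- The exponents `z` with `t^z ω_R ⊆ R`. -/
def canonicalMultipliers (H : AddSubmonoid ℕ) : Set ℕ :=
  {z | ∀ γ, γ ∉ H → ∃ h ∈ H, z = γ + h}

/-- Exponents `s` for which `t^s = t^z · t^{-γ}` lies in `tr_R(ω_R)`, with `t^z ω_R ⊆ R` and `γ`
a gap. -/
def traceExponents (H : AddSubmonoid ℕ) : Set ℕ :=
  {s | ∃ γ, γ ∉ H ∧ s + γ ∈ canonicalMultipliers H}

lemma le_of_notMem (hFmax : ∀ n, F < n → n ∈ H) {γ : ℕ} (hγ : γ ∉ H) : γ ≤ F := by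
  by_contra hlt
  exact hγ (hFmax γ (by omega))

lemma finite_setOf_notMem (hFmax : ∀ n, F < n → n ∈ H) : {n | n ∉ H}.Finite :=
  (Set.finite_Iic F).subset fun _ => le_of_notMem hFmax

lemma frobenius_mem_PF (hF : F ∉ H) (hFmax : ∀ n, F < n → n ∈ H) : F ∈ PF H :=
  ⟨hF, fun h _ hh0 => hFmax _ (by omega)⟩

lemma exists_mem_PF_eq_add (hFmax : ∀ n, F < n → n ∈ H) {γ : ℕ} (hγ : γ ∉ H) :
    ∃ p ∈ PF H, ∃ h ∈ H, p = γ + h := by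
  have hfin : {x | x ∉ H ∧ ∃ h ∈ H, x = γ + h}.Finite :=
    (finite_setOf_notMem hFmax).subset fun _ hx => hx.1
  obtain ⟨p, ⟨hp, h₀, hh₀, rfl⟩, hmax⟩ :=
    hfin.exists_maximalFor id _ ⟨γ, hγ, 0, H.zero_mem, rfl⟩
  refine ⟨γ + h₀, ⟨hp, fun h hh hh0 => ?_⟩, h₀, hh₀, rfl⟩
  by_contra hnot
  have := hmax (j := γ + h₀ + h) ⟨hnot, h₀ + h, H.add_mem hh₀ hh, by omega⟩ (by simp)
  simp only [id] at this
  omega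

/-- Every gap lies below a pseudo-Frobenius number in the order of `H`, so `w + β` is a
multiplier as soon as it dominates all pseudo-Frobenius numbers. -/
lemma exists_mem_PF_not_add_eq_of_notMem_traceExponents (hFmax : ∀ n, F < n → n ∈ H)
    {w β : ℕ} (hw : w ∉ traceExponents H) (hβ : β ∉ H) :
    ∃ p ∈ PF H, ¬∃ h ∈ H, w + β = p + h := by
  by_contra hall
  push Not at hall
  refine hw ⟨β, hβ, fun γ hγ => ?_⟩
  obtain ⟨p, hp, h₁, hh₁, rfl⟩ := exists_mem_PF_eq_add hFmax hγ
  obtain ⟨h₂, hh₂, he⟩ := hall _ hp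
  exact ⟨h₁ + h₂, H.add_mem hh₁ hh₂, by omega⟩

lemma mem_traceExponents_of_lt (hF : F ∉ H) (hFmax : ∀ n, F < n → n ∈ H) {s : ℕ}
    (hs : F < s) : s ∈ traceExponents H :=
  ⟨F, hF, fun γ hγ =>
    ⟨s + F - γ, hFmax _ (by have := le_of_notMem hFmax hγ; omega),
      by have := le_of_notMem hFmax hγ; omega⟩⟩

lemma sub_mem_dualGaps (hFmax : ∀ n, F < n → n ∈ H) {w p : ℕ} (hw : w ∈ H) (hp : p ∉ H)
    (hwp : ¬∃ h ∈ H, w + F = p + h) : w < p ∧ p - w ∈ dualGaps H F := by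
  have hpF := le_of_notMem hFmax hp
  have hwp' : w < p := by
    by_contra hle
    rcases (show w = p ∨ p < w by omega) with rfl | hlt
    · exact hp hw
    · exact hwp ⟨w - p + F, hFmax _ (by omega), by omega⟩
  refine ⟨hwp', fun hmem => hp ?_, fun hmem => hwp ⟨_, hmem, by omega⟩⟩
  simpa [Nat.add_sub_cancel' hwp'.le] using H.add_mem hw hmem

lemma frobenius_sub_mem_dualGaps (hFmax : ∀ n, F < n → n ∈ H) {g : ℕ} (hg : g ∈ dualGaps H F) :
    F - g ∈ dualGaps H F := by
  have := le_of_notMem hFmax hg.1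
  exact ⟨hg.2, by rw [Nat.sub_sub_self this]; exact hg.1⟩

lemma ncard_lt_frobenius_add_ncard_dualGaps_le (hF : F ∉ H) (hFmax : ∀ n, F < n → n ∈ H) :
    {h | h ∈ H ∧ h < F}.ncard + (dualGaps H F).ncard ≤ {n | n ∉ H}.ncard := by
  have hinj : Set.InjOn (F - ·) {h | h ∈ H ∧ h < F} := fun a ha b hb e => by
    simp only at e
    have := ha.2; have := hb.2; omega
  have hreflect : (F - ·) '' {h | h ∈ H ∧ h < F} ⊆ {n | n ∉ H} := by
    rintro _ ⟨h, ⟨hh, hlt⟩, rfl⟩ hmem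
    exact hF (by simpa [Nat.add_sub_cancel' hlt.le] using H.add_mem hh hmem)
  have hdisj : Disjoint ((F - ·) '' {h | h ∈ H ∧ h < F}) (dualGaps H F) := by
    rw [Set.disjoint_left]
    rintro _ ⟨h, ⟨hh, hlt⟩, rfl⟩ hg
    exact hg.2 (by rwa [Nat.sub_sub_self hlt.le])
  have hfin := finite_setOf_notMem hFmax
  rw [← hinj.ncard_image, ← Set.ncard_union_eq hdisj (hfin.subset hreflect)
    (hfin.subset fun _ hg => hg.1)]
  exact Set.ncard_le_ncard (Set.union_subset hreflect fun _ hg => hg.1) hfin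

/-- The injection is `w ↦ f₁ - w` or the reflection `w ↦ F - (f₂ - w)`; the two branches cannot
collide because `f₂ ∉ H`. -/
lemma ncard_le_ncard_dualGaps (hFmax : ∀ n, F < n → n ∈ H) {f₁ f₂ : ℕ} (hf₁ : f₁ ∉ H)
    (hf₂ : f₂ ∉ H) {S : Set ℕ}
    (hS : ∀ w ∈ S, w ∈ H ∧ ((¬∃ h ∈ H, w + F = f₁ + h) ∨ ¬∃ h ∈ H, w + F = f₂ + h)) :
    S.ncard ≤ (dualGaps H F).ncard := by
  classical
  let ψ : ℕ → ℕ := fun w => if ∃ h ∈ H, w + F = f₁ + h then F - (f₂ - w) else f₁ - w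
  have hf₂F := le_of_notMem hFmax hf₂
  have hψ : ∀ w ∈ S,
      ((¬∃ h ∈ H, w + F = f₁ + h) ∧ w < f₁ ∧ ψ w = f₁ - w ∧ f₁ - w ∈ dualGaps H F) ∨
      ((∃ h ∈ H, w + F = f₁ + h) ∧ w < f₂ ∧ ψ w = F - (f₂ - w) ∧ ψ w ∈ dualGaps H F) := by
    intro w hw
    by_cases h₁ : ∃ h ∈ H, w + F = f₁ + h
    · have h₂ := (hS w hw).2.resolve_left (not_not.2 h₁)
      obtain ⟨hlt, hg⟩ := sub_mem_dualGaps hFmax (hS w hw).1 hf₂ h₂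
      exact Or.inr ⟨h₁, hlt, if_pos h₁, by simpa [ψ, h₁] using frobenius_sub_mem_dualGaps hFmax hg⟩
    · obtain ⟨hlt, hg⟩ := sub_mem_dualGaps hFmax (hS w hw).1 hf₁ h₁
      exact Or.inl ⟨h₁, hlt, if_neg h₁, hg⟩
  refine Set.ncard_le_ncard_of_injOn ψ (fun w hw => ?_) (fun x hx y hy hxy => ?_)
    ((finite_setOf_notMem hFmax).subset fun _ hg => hg.1)
  · rcases hψ w hw with ⟨-, -, he, hg⟩ | ⟨-, -, -, hg⟩
    · exact he ▸ hg
    · exact hg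
  · rcases hψ x hx with ⟨-, hx₁, hex, -⟩ | ⟨⟨h, hh, hxh⟩, hx₂, hex, -⟩ <;>
    rcases hψ y hy with ⟨-, hy₁, hey, -⟩ | ⟨⟨h', hh', hyh⟩, hy₂, hey, -⟩
    · omega
    · exact absurd (H.add_mem (hS x hx).1 hh') (by rw [(by omega : x + h' = f₂)]; exact hf₂)
    · exact absurd (H.add_mem (hS y hy).1 hh) (by rw [(by omega : y + h = f₂)]; exact hf₂)
    · omega

lemma ncard_diff_traceExponents_le_ncard_dualGaps (hF : F ∉ H)
    (hFmax : ∀ n, F < n → n ∈ H) (htype : (PF H).ncard ≤ 3) :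
    ((H : Set ℕ) \ traceExponents H).ncard ≤ (dualGaps H F).ncard := by
  obtain ⟨f₁, hf₁, f₂, hf₂, hPF⟩ := Set.exists_subset_insert_pair_of_ncard_le_three
    ((finite_setOf_notMem hFmax).subset fun _ hp => hp.1) htype
    (frobenius_mem_PF hF hFmax)
  refine ncard_le_ncard_dualGaps hFmax hf₁.1 hf₂.1 fun w ⟨hw, hwT⟩ => ⟨hw, ?_⟩
  obtain ⟨p, hp, hwp⟩ := exists_mem_PF_not_add_eq_of_notMem_traceExponents hFmax hwT hF
  rcases hPF hp with rfl | rfl | rfl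
  · exact absurd ⟨w, hw, add_comm w p⟩ hwp
  · exact Or.inl hwp
  · exact Or.inr hwp

lemma finite_diff_traceExponents (hF : F ∉ H) (hFmax : ∀ n, F < n → n ∈ H) :
    ((H : Set ℕ) \ traceExponents H).Finite :=
  (Set.finite_Iic F).subset fun _ hs => not_lt.1 fun hlt =>
    hs.2 (mem_traceExponents_of_lt hF hFmax hlt)

lemma ncard_diff_traceExponents_add_ncard_le (hF : F ∉ H) (hFmax : ∀ n, F < n → n ∈ H)
    (htype : (PF H).ncard ≤ 3) :
    ((H : Set ℕ) \ traceExponents H).ncard + {h | h ∈ H ∧ h < F}.ncard ≤ {n | n ∉ H}.ncard := by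
  have := ncard_diff_traceExponents_le_ncard_dualGaps hF hFmax htype
  have := ncard_lt_frobenius_add_ncard_dualGaps_le hF hFmax
  omega

section SemigroupRing

variable {K : Type*} [Field K] {H : AddSubmonoid ℕ}

lemma X_pow_mem_nsRing {h : ℕ} (hh : h ∈ H) : (RatFunc.X : RatFunc K) ^ h ∈ nsRing K H :=
  Algebra.subset_adjoin ⟨h, hh, rfl⟩

lemma X_pow_mul_X_zpow_neg {z α s : ℕ} (he : z = α + s) :
    (RatFunc.X : RatFunc K) ^ z * (RatFunc.X : RatFunc K) ^ (-(α : ℤ)) =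
      (RatFunc.X : RatFunc K) ^ s := by
  rw [← zpow_natCast _ z, ← zpow_natCast _ s, ← zpow_add₀ RatFunc.X_ne_zero]
  congr 1
  omega

lemma X_pow_mul_mem_nsRing {z : ℕ} (hz : z ∈ canonicalMultipliers H) {y : RatFunc K}
    (hy : y ∈ nsOmega K H) : (RatFunc.X : RatFunc K) ^ z * y ∈ nsRing K H := by
  induction hy using Submodule.span_induction with
  | mem x hx =>
    obtain ⟨α, hα, rfl⟩ := hx
    obtain ⟨h, hh, he⟩ := hz α hα
    rw [X_pow_mul_X_zpow_neg he]
    exact X_pow_mem_nsRing hh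
  | zero => simp
  | add x y _ _ hx hy => simpa [mul_add] using (nsRing K H).add_mem hx hy
  | smul r x _ hx =>
    rw [Algebra.smul_def, mul_left_comm]
    exact (nsRing K H).mul_mem r.2 hx

def mulXPow {z : ℕ} (hz : z ∈ canonicalMultipliers H) :
    ↥(nsOmega K H) →ₗ[↥(nsRing K H)] ↥(nsRing K H) where
  toFun y := ⟨(RatFunc.X : RatFunc K) ^ z * y, X_pow_mul_mem_nsRing hz y.2⟩
  map_add' y₁ y₂ := Subtype.ext (mul_add _ _ _)
  map_smul' r y := Subtype.ext (by
    simp only [SetLike.val_smul, Subalgebra.smul_def, RingHom.id_apply, smul_eq_mul,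
      MulMemClass.coe_mul]
    ring)

lemma X_pow_mem_trOmega {s : ℕ} (hs : s ∈ traceExponents H) (hsH : s ∈ H) :
    (⟨_, X_pow_mem_nsRing hsH⟩ : ↥(nsRing K H)) ∈ trOmega K H := by
  obtain ⟨γ, hγ, hz⟩ := hs
  have hgen : (RatFunc.X : RatFunc K) ^ (-(γ : ℤ)) ∈ nsOmega K H :=
    Submodule.subset_span ⟨γ, hγ, rfl⟩
  have himage : mulXPow hz ⟨_, hgen⟩ = ⟨_, X_pow_mem_nsRing hsH⟩ :=
    Subtype.ext (X_pow_mul_X_zpow_neg (add_comm s γ))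
  exact le_iSup (fun f => LinearMap.range f) (mulXPow hz) ⟨_, himage⟩

variable (K H) in
lemma toSubmodule_nsRing :
    Subalgebra.toSubmodule (nsRing K H) =
      Submodule.span K {x : RatFunc K | ∃ h ∈ H, x = (RatFunc.X : RatFunc K) ^ h} := by
  refine Algebra.adjoin_eq_span_of_subset K fun x hx => Submodule.subset_span ?_
  induction hx using Submonoid.closure_induction with
  | mem x hx => exact hx
  | one => exact ⟨0, H.zero_mem, (pow_zero _).symm⟩
  | mul x y _ _ hx hy =>
    obtain ⟨m, hm, rfl⟩ := hx
    obtain ⟨n, hn, rfl⟩ := hy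
    exact ⟨m + n, H.add_mem hm hn, (pow_add _ _ _).symm⟩

variable (K) in
def monomialClass {h : ℕ} (hh : h ∈ H) : ↥(nsRing K H) ⧸ trOmega K H :=
  Submodule.Quotient.mk ⟨_, X_pow_mem_nsRing hh⟩

lemma span_monomialClass_eq_top :
    Submodule.span K (Set.range fun w : ↥((H : Set ℕ) \ traceExponents H) =>
      monomialClass K w.2.1) = ⊤ := by
  set V := Submodule.span K (Set.range fun w : ↥((H : Set ℕ) \ traceExponents H) =>
    monomialClass K w.2.1)
  have hmono : ∀ h (hh : h ∈ H), monomialClass K hh ∈ V := by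
    intro h hh
    by_cases hT : h ∈ traceExponents H
    · rw [monomialClass, (Submodule.Quotient.mk_eq_zero _).2 (X_pow_mem_trOmega hT hh)]
      exact V.zero_mem
    · exact Submodule.subset_span ⟨⟨h, hh, hT⟩, rfl⟩
  have hR : Subalgebra.toSubmodule (nsRing K H) ≤
      (V.comap ((trOmega K H).mkQ.restrictScalars K)).map (nsRing K H).val.toLinearMap := by
    rw [toSubmodule_nsRing, Submodule.span_le]
    rintro _ ⟨h, hh, rfl⟩
    exact ⟨⟨_, X_pow_mem_nsRing hh⟩, hmono h hh, rfl⟩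
  rw [eq_top_iff]
  rintro q -
  obtain ⟨r, rfl⟩ := Submodule.Quotient.mk_surjective _ q
  obtain ⟨r', hr', hrr'⟩ := hR r.2
  rwa [← Subtype.ext hrr']

lemma moduleLength_quotient_trOmega_le (hW : ((H : Set ℕ) \ traceExponents H).Finite) :
    moduleLength ↥(nsRing K H) (↥(nsRing K H) ⧸ trOmega K H) ≤
      (((H : Set ℕ) \ traceExponents H).ncard : WithBot ℕ∞) := by
  have := hW.fintype
  have hspan := span_monomialClass_eq_top (K := K) (H := H)
  have : Module.Finite K (↥(nsRing K H) ⧸ trOmega K H) :=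
    ⟨⟨(Set.finite_range _).toFinset, by rw [Set.Finite.coe_toFinset, hspan]⟩⟩
  calc moduleLength ↥(nsRing K H) (↥(nsRing K H) ⧸ trOmega K H)
      ≤ Order.krullDim (Submodule K (↥(nsRing K H) ⧸ trOmega K H)) :=
        Order.krullDim_le_of_orderEmbedding (Submodule.restrictScalarsEmbedding K _ _)
    _ = Module.finrank K (↥(nsRing K H) ⧸ trOmega K H) := by
        rw [← Module.coe_length, Module.length_eq_finrank]; rfl
    _ ≤ (((H : Set ℕ) \ traceExponents H).ncard : WithBot ℕ∞) := by
        rw [← Nat.card_coe_set_eq, Nat.card_eq_fintype_card]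
        exact_mod_cast finrank_le_of_span_eq_top hspan

end SemigroupRing

end NumericalSemigroup

theorem length_trace_le_of_type_le_three_general
    (K : Type*) [Field K] (H : AddSubmonoid ℕ)
    (F : ℕ) (hF : F ∉ H) (hFmax : ∀ n : ℕ, F < n → n ∈ H)
    (htype : (PF H).ncard ≤ 3) :
    moduleLength ↥(nsRing K H) (↥(nsRing K H) ⧸ trOmega K H)
        + ({h : ℕ | h ∈ H ∧ h < F}.ncard : WithBot ℕ∞) ≤
      ({n : ℕ | n ∉ H}.ncard : WithBot ℕ∞) := by
  open NumericalSemigroup in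
  calc _ ≤ (((H : Set ℕ) \ traceExponents H).ncard : WithBot ℕ∞)
          + ({h : ℕ | h ∈ H ∧ h < F}.ncard : WithBot ℕ∞) := by
        gcongr
        exact moduleLength_quotient_trOmega_le (finite_diff_traceExponents hF hFmax)
    _ ≤ _ := by exact_mod_cast ncard_diff_traceExponents_add_ncard_le hF hFmax htype

/-- If the Cohen-Macaulay type of `R = K[H]` is at most `3`
(i.e. `|PF(H)| ≤ 3`), then `ℓ_R(R/tr_R(ω_R)) ≤ g(H) − n(H)`, stated as
`ℓ_R(R/tr_R(ω_R)) + n(H) ≤ g(H)`. -/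
theorem length_trace_le_of_type_le_three
    (K : Type*) [Field K] (H : AddSubmonoid ℕ) (hfin : {n : ℕ | n ∉ H}.Finite)
    (F : ℕ) (hF : F ∉ H) (hFmax : ∀ n : ℕ, F < n → n ∈ H)
    (htype : (PF H).ncard ≤ 3) :
    moduleLength ↥(nsRing K H) (↥(nsRing K H) ⧸ trOmega K H)
        + ({h : ℕ | h ∈ H ∧ h < F}.ncard : WithBot ℕ∞) ≤
      ({n : ℕ | n ∉ H}.ncard : WithBot ℕ∞) :=
  length_trace_le_of_type_le_three_general K H F hF hFmax htype
end
end

section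
/- For ℓ ≥ 0, the numerical semigroup H' generated by all integers m with 6ℓ+10 ≤ m ≤ 9ℓ+14 is symmetric, i.e., for every integer z exactly one of z and F(H')−z belongs to H'. -/
/-- A numerical semigroup `H` is symmetric: for every integer `z`, exactly one of `z` and
`F(H) − z` belongs to `H`, where `F(H) = sSup (ℕ∖H)` is the Frobenius number. -/
def IsSymmetricNS (H : AddSubmonoid ℕ) : Prop :=
  ∀ z : ℤ, (∃ h ∈ H, (h : ℤ) = z) ↔
    ¬ ∃ h ∈ H, (h : ℤ) = ((sSup {n : ℕ | n ∉ H} : ℕ) : ℤ) - z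

/-! The elements of `⟨a, a+1, …, b⟩` are exactly the numbers in some interval `[k a, k b]`.
When `3a = 2b + 2` (here `a = 6ℓ+10`, `b = 9ℓ+14`) and `a < b`, these intervals overlap from
`k = 3` on, so the gaps are `[1, a-1]`, `[b+1, 2a-1]` and `[2b+1, 3a-1]`, and `F = 3a - 1`.
The reflection `n ↦ F - n` exchanges `[1, a-1]` with `[2a, 2b]`, `[b+1, 2a-1]` with `[a, b]`,
and `F` with `0`: it swaps gaps and elements below `F`, which is symmetry. -/

theorem isSymmetricNS_of_isGreatest {H : AddSubmonoid ℕ} {F : ℕ}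
    (hF : IsGreatest {n | n ∉ H} F) (hsymm : ∀ n ≤ F, n ∈ H ↔ F - n ∉ H) :
    IsSymmetricNS H := by
  have mem_large : ∀ n, F < n → n ∈ H := fun n hn => by
    by_contra h
    exact absurd (hF.2 h) (by omega)
  have exists_cast_iff : ∀ n : ℕ, (∃ h ∈ H, (h : ℤ) = n) ↔ n ∈ H := by simp
  intro z
  rw [hF.csSup_eq]
  rcases lt_or_ge z 0 with hz | hz
  · have hF_sub : (F : ℤ) - z = ((F - z).toNat : ℕ) := by omega
    rw [hF_sub, exists_cast_iff]
    simp only [mem_large (F - z).toNat (by omega), not_true_eq_false, iff_false, not_exists,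
      not_and]
    omega
  lift z to ℕ using hz
  rw [exists_cast_iff]
  rcases le_or_gt z F with hzF | hzF
  · rw [← Nat.cast_sub hzF, exists_cast_iff, hsymm z hzF]
  · simp only [mem_large z hzF, true_iff, not_exists, not_and]
    omega

theorem mem_closure_Icc_iff {a b n : ℕ} (hab : a ≤ b) :
    n ∈ AddSubmonoid.closure (Set.Icc a b) ↔ ∃ k, k * a ≤ n ∧ n ≤ k * b := by
  constructor
  · intro hn
    induction hn using AddSubmonoid.closure_induction with
    | mem x hx => exact ⟨1, by simpa using hx.1, by simpa using hx.2⟩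
    | zero => exact ⟨0, by simp, by simp⟩
    | add x y _ _ hx hy =>
      obtain ⟨k, hkx, hxk⟩ := hx
      obtain ⟨j, hjy, hyj⟩ := hy
      exact ⟨k + j, by rw [add_mul]; omega, by rw [add_mul]; omega⟩
  · rintro ⟨k, hkn, hnk⟩
    induction k generalizing n with
    | zero => simp_all
    | succ k ih =>
      rw [Nat.succ_mul] at hkn hnk
      have hka : k * a ≤ k * b := Nat.mul_le_mul_left k hab
      -- the generator `m` is chosen so that `n - m` stays in `[k a, k b]`
      set m := max a (n - k * b)
      have hm : m ∈ AddSubmonoid.closure (Set.Icc a b) :=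
        AddSubmonoid.subset_closure ⟨le_max_left _ _, max_le hab (by omega)⟩
      have hrest : n - m ∈ AddSubmonoid.closure (Set.Icc a b) := ih (by omega) (by omega)
      rw [show n = m + (n - m) by omega]
      exact add_mem hm hrest

theorem mem_closure_Icc_of_mul_le {a b k n : ℕ} (hab : a ≤ b) (ha : 0 < a)
    (hk : (k + 1) * a ≤ k * b + 1) (hn : k * a ≤ n) :
    n ∈ AddSubmonoid.closure (Set.Icc a b) := by
  rw [mem_closure_Icc_iff hab]
  refine ⟨n / a, Nat.div_mul_le_self n a, ?_⟩
  obtain ⟨t, ht⟩ : ∃ t, n / a = k + t :=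
    Nat.exists_eq_add_of_le ((Nat.le_div_iff_mul_le ha).2 hn)
  have hdiv : n < (n / a + 1) * a := Nat.lt_mul_of_div_lt (Nat.lt_succ_self _) ha
  rw [ht] at hdiv ⊢
  nlinarith

theorem mem_closure_Icc_iff_of_lt {a b n : ℕ} (hab : a ≤ b) (hn : n < 3 * a) :
    n ∈ AddSubmonoid.closure (Set.Icc a b) ↔
      n = 0 ∨ (a ≤ n ∧ n ≤ b) ∨ (2 * a ≤ n ∧ n ≤ 2 * b) := by
  rw [mem_closure_Icc_iff hab]
  constructor
  · rintro ⟨k, hkn, hnk⟩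
    have hk : k < 3 := lt_of_mul_lt_mul_right (hkn.trans_lt hn) a.zero_le
    interval_cases k <;> omega
  · rintro (h | h | h)
    exacts [⟨0, by omega, by omega⟩, ⟨1, by omega, by omega⟩, ⟨2, by omega, by omega⟩]

theorem isGreatest_not_mem_closure_Icc {a b : ℕ} (hab : a < b) (h3 : 3 * a = 2 * b + 2) :
    IsGreatest {n | n ∉ AddSubmonoid.closure (Set.Icc a b)} (3 * a - 1) := by
  refine ⟨?_, fun n hn => ?_⟩
  · rw [Set.mem_ofPred_eq, mem_closure_Icc_iff_of_lt hab.le (by omega)]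
    omega
  · by_contra hlt
    exact hn (mem_closure_Icc_of_mul_le (k := 3) hab.le (by omega) (by omega) (by omega))

theorem isSymmetricNS_closure_Icc {a b : ℕ} (hab : a < b) (h3 : 3 * a = 2 * b + 2) :
    IsSymmetricNS (AddSubmonoid.closure (Set.Icc a b)) := by
  refine isSymmetricNS_of_isGreatest (isGreatest_not_mem_closure_Icc hab h3) fun n hn => ?_
  rw [mem_closure_Icc_iff_of_lt hab.le (by omega), mem_closure_Icc_iff_of_lt hab.le (by omega)]
  omega

/-- For every `ℓ ≥ 0`, the numerical semigroup
`H' = ⟨m : 6ℓ+10 ≤ m ≤ 9ℓ+14⟩` is symmetric. -/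
theorem symmetric_interval_semigroup (l : ℕ) :
    IsSymmetricNS (AddSubmonoid.closure {m : ℕ | 6 * l + 10 ≤ m ∧ m ≤ 9 * l + 14}) :=
  isSymmetricNS_closure_Icc (a := 6 * l + 10) (b := 9 * l + 14) (by omega) (by omega)
end
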